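/- Let q ∈ [1,∞), let m, M, R₀ > 0 with m ≤ M, let b₀, b¹, b² ∈ [m, M], let x¹, x² ∈ B(0,R₀) ⊂ ℝ³, let 0 < r ≤ R₀, and set c_j := b₀ + (b^j − b₀) 1_{B(x^j, r)} for j = 1,2. Let ε ≥ 0 and suppose that for every smooth function φ : ℝ³ → ℂ that is harmonic on ℝ³ one has |(b¹)^{−2} φ(x¹) − (b²)^{−2} φ(x²)| ≤ ε · sup_{x ∈ cl B(0, 2R₀)} |φ(x)|. Then there exists a constant C > 0 depending only on q, m, M and R₀ such that ‖c₁ − c₂‖_{L^q(ℝ³)} ≤ C ε^{1/q}. -/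

import Mathlib

open MeasureTheory Metric
open scoped ENNReal

/-- The Laplacian on `ℝ³`: sum of the second directional derivatives in the three
coordinate directions. -/
noncomputable def lap {F : Type*} [NormedAddCommGroup F] [NormedSpace ℝ F]
    (f : EuclideanSpace ℝ (Fin 3) → F) (x : EuclideanSpace ℝ (Fin 3)) : F :=
  ∑ i : Fin 3, fderiv ℝ (fun y => fderiv ℝ f y (EuclideanSpace.single i 1)) x
    (EuclideanSpace.single i 1)

section Aux

local notation "E3" => EuclideanSpace ℝ (Fin 3)

lemma SHS.lap_clm {F : Type*} [NormedAddCommGroup F] [NormedSpace ℝ F]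
    (L : E3 →L[ℝ] F) (z : E3) : lap (⇑L) z = 0 := by
  have h1 : ∀ y, fderiv ℝ (⇑L) y = L := fun y => L.fderiv
  simp only [lap, h1, fderiv_const]
  simp

lemma SHS.abs_coord_le_norm (x : E3) (i : Fin 3) : |x i| ≤ ‖x‖ := by
  rw [EuclideanSpace.norm_eq]
  have h1 : |x i| = Real.sqrt (‖x i‖ ^ 2) := by
    rw [Real.sqrt_sq_eq_abs, Real.norm_eq_abs, abs_abs]
  rw [h1]
  apply Real.sqrt_le_sqrt
  exact Finset.single_le_sum (f := fun j => ‖x j‖ ^ 2) (fun j _ => by positivity)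
    (Finset.mem_univ i)

lemma SHS.extract (R₀ : ℝ) (hR₀ : 0 < R₀) (b₁ b₂ : ℝ)
    (x₁ x₂ : E3) (ε : ℝ) (hε : 0 ≤ ε)
    (hyp : ∀ φ : E3 → ℂ, ContDiff ℝ (⊤ : ℕ∞) φ → (∀ z, lap φ z = 0) →
          ‖(((b₁ ^ 2)⁻¹ : ℝ) : ℂ) * φ x₁ - (((b₂ ^ 2)⁻¹ : ℝ) : ℂ) * φ x₂‖ ≤
            ε * ⨆ z : closedBall (0 : E3) (2 * R₀), ‖φ z‖) :
    |(b₁ ^ 2)⁻¹ - (b₂ ^ 2)⁻¹| ≤ ε ∧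
      ∀ i : Fin 3, |(b₁ ^ 2)⁻¹ * x₁ i - (b₂ ^ 2)⁻¹ * x₂ i| ≤ ε * (2 * R₀) := by
  haveI : Nonempty (closedBall (0 : E3) (2 * R₀)) :=
    (nonempty_closedBall.mpr (by positivity)).to_subtype
  constructor
  · have h := hyp (fun _ => (1 : ℂ)) contDiff_const (fun z => by simp [lap])
    simp only [mul_one] at h
    have hsup : (⨆ z : closedBall (0 : E3) (2 * R₀), ‖(1 : ℂ)‖) = 1 := by
      simp [ciSup_const]
    rw [hsup, mul_one] at h
    calc |(b₁ ^ 2)⁻¹ - (b₂ ^ 2)⁻¹|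
        = ‖(((b₁ ^ 2)⁻¹ : ℝ) : ℂ) - (((b₂ ^ 2)⁻¹ : ℝ) : ℂ)‖ := by
          rw [← Complex.ofReal_sub, Complex.norm_real, Real.norm_eq_abs]
      _ ≤ ε := h
  · intro i
    set L : E3 →L[ℝ] ℂ := Complex.ofRealCLM.comp (EuclideanSpace.proj i) with hL
    have h := hyp (⇑L) L.contDiff (SHS.lap_clm L)
    have hLz : ∀ z : E3, L z = ((z i : ℝ) : ℂ) := fun z => rfl
    have hsup : (⨆ z : closedBall (0 : E3) (2 * R₀), ‖L z‖) ≤ 2 * R₀ := by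
      apply ciSup_le
      intro z
      rw [hLz, Complex.norm_real, Real.norm_eq_abs]
      calc |(z : E3) i| ≤ ‖(z : E3)‖ := SHS.abs_coord_le_norm _ i
        _ ≤ 2 * R₀ := by
            have hz := mem_closedBall.mp z.2
            rwa [dist_zero_right] at hz
    have h2 : ‖(((b₁ ^ 2)⁻¹ : ℝ) : ℂ) * L x₁ - (((b₂ ^ 2)⁻¹ : ℝ) : ℂ) * L x₂‖
        ≤ ε * (2 * R₀) := h.trans (mul_le_mul_of_nonneg_left hsup hε)
    calc |(b₁ ^ 2)⁻¹ * x₁ i - (b₂ ^ 2)⁻¹ * x₂ i|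
        = ‖(((b₁ ^ 2)⁻¹ : ℝ) : ℂ) * L x₁ - (((b₂ ^ 2)⁻¹ : ℝ) : ℂ) * L x₂‖ := by
          rw [hLz, hLz, ← Complex.ofReal_mul, ← Complex.ofReal_mul, ← Complex.ofReal_sub,
            Complex.norm_real, Real.norm_eq_abs]
      _ ≤ ε * (2 * R₀) := h2

lemma SHS.b_diff_le (m M ε : ℝ) (hm : 0 < m) (hε : 0 ≤ ε)
    (b₁ b₂ : ℝ) (hb1m : m ≤ b₁) (hb1M : b₁ ≤ M) (hb2m : m ≤ b₂) (hb2M : b₂ ≤ M)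
    (hA : |(b₁ ^ 2)⁻¹ - (b₂ ^ 2)⁻¹| ≤ ε) :
    |b₁ - b₂| ≤ M ^ 4 / (2 * m) * ε := by
  have hb₁ : 0 < b₁ := lt_of_lt_of_le hm hb1m
  have hb₂ : 0 < b₂ := lt_of_lt_of_le hm hb2m
  have hM : 0 < M := lt_of_lt_of_le hb₁ hb1M
  have h1 : b₂ ^ 2 - b₁ ^ 2 = b₁ ^ 2 * b₂ ^ 2 * ((b₁ ^ 2)⁻¹ - (b₂ ^ 2)⁻¹) := by
    field_simp
  have h2 : |b₂ ^ 2 - b₁ ^ 2| ≤ M ^ 4 * ε := by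
    rw [h1, abs_mul]
    have e1 : |b₁ ^ 2 * b₂ ^ 2| ≤ M ^ 4 := by
      rw [abs_of_nonneg (by positivity)]
      calc b₁ ^ 2 * b₂ ^ 2 ≤ M ^ 2 * M ^ 2 := by gcongr <;> positivity
        _ = M ^ 4 := by ring
    exact mul_le_mul e1 hA (abs_nonneg _) (by positivity)
  have h3 : |b₁ - b₂| * (2 * m) ≤ M ^ 4 * ε := by
    calc |b₁ - b₂| * (2 * m) ≤ |b₁ - b₂| * (b₁ + b₂) := by
          have : 2 * m ≤ b₁ + b₂ := by linarith
          exact mul_le_mul_of_nonneg_left this (abs_nonneg _)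
      _ = |(b₁ - b₂) * (b₁ + b₂)| := by
          rw [abs_mul, abs_of_nonneg (by linarith : (0:ℝ) ≤ b₁ + b₂)]
      _ = |b₂ ^ 2 - b₁ ^ 2| := by rw [← abs_neg]; ring_nf
      _ ≤ M ^ 4 * ε := h2
  have : M ^ 4 / (2 * m) * ε * (2 * m) = M ^ 4 * ε := by field_simp
  nlinarith [h3]

lemma SHS.x_dist_le (m M R₀ ε : ℝ) (hm : 0 < m) (hR₀ : 0 < R₀) (hε : 0 ≤ ε)
    (b₁ b₂ : ℝ) (hb1m : m ≤ b₁) (hb1M : b₁ ≤ M) (hb2m : m ≤ b₂) (hb2M : b₂ ≤ M)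
    (x₁ x₂ : E3) (hx₂ : ‖x₂‖ ≤ R₀)
    (hA : |(b₁ ^ 2)⁻¹ - (b₂ ^ 2)⁻¹| ≤ ε)
    (hB : ∀ i : Fin 3, |(b₁ ^ 2)⁻¹ * x₁ i - (b₂ ^ 2)⁻¹ * x₂ i| ≤ ε * (2 * R₀)) :
    dist x₁ x₂ ≤ 6 * M ^ 2 * R₀ * ε := by
  have hb₁ : 0 < b₁ := lt_of_lt_of_le hm hb1m
  have hM : 0 < M := lt_of_lt_of_le hb₁ hb1M
  have hcoord : ∀ i : Fin 3, |x₁ i - x₂ i| ≤ 3 * M ^ 2 * R₀ * ε := by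
    intro i
    have e1 : (b₁ ^ 2)⁻¹ * (x₁ i - x₂ i)
        = ((b₁ ^ 2)⁻¹ * x₁ i - (b₂ ^ 2)⁻¹ * x₂ i) + ((b₂ ^ 2)⁻¹ - (b₁ ^ 2)⁻¹) * x₂ i := by
      ring
    have e2 : |(b₁ ^ 2)⁻¹ * (x₁ i - x₂ i)| ≤ 3 * R₀ * ε := by
      rw [e1]
      calc _ ≤ |(b₁ ^ 2)⁻¹ * x₁ i - (b₂ ^ 2)⁻¹ * x₂ i| + |((b₂ ^ 2)⁻¹ - (b₁ ^ 2)⁻¹) * x₂ i| :=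
            abs_add_le _ _
        _ ≤ ε * (2 * R₀) + ε * R₀ := by
            gcongr
            · exact hB i
            · rw [abs_mul]
              have h2 : |x₂ i| ≤ R₀ := le_trans (SHS.abs_coord_le_norm x₂ i) hx₂
              have h3 : |(b₂ ^ 2)⁻¹ - (b₁ ^ 2)⁻¹| ≤ ε := by rwa [abs_sub_comm]
              exact mul_le_mul h3 h2 (abs_nonneg _) hε
        _ = 3 * R₀ * ε := by ring
    have e3 : |x₁ i - x₂ i| = b₁ ^ 2 * |(b₁ ^ 2)⁻¹ * (x₁ i - x₂ i)| := by
      rw [abs_mul, abs_of_nonneg (by positivity : (0:ℝ) ≤ (b₁ ^ 2)⁻¹), ← mul_assoc,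
        mul_inv_cancel₀ (by positivity : (b₁:ℝ) ^ 2 ≠ 0)]
      try rw [one_mul]
    rw [e3]
    calc b₁ ^ 2 * |(b₁ ^ 2)⁻¹ * (x₁ i - x₂ i)| ≤ M ^ 2 * (3 * R₀ * ε) := by
          exact mul_le_mul (pow_le_pow_left₀ (by positivity) hb1M 2) e2 (abs_nonneg _)
            (by positivity)
      _ = 3 * M ^ 2 * R₀ * ε := by ring
  rw [EuclideanSpace.dist_eq]
  have h4 : ∑ i : Fin 3, dist (x₁ i) (x₂ i) ^ 2 ≤ (6 * M ^ 2 * R₀ * ε) ^ 2 := by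
    have hic : ∀ i : Fin 3, dist (x₁ i) (x₂ i) ^ 2 ≤ (3 * M ^ 2 * R₀ * ε) ^ 2 := by
      intro i
      rw [Real.dist_eq]
      exact sq_le_sq' (by linarith [(hcoord i), abs_nonneg (x₁ i - x₂ i)]) (hcoord i)
    calc ∑ i : Fin 3, dist (x₁ i) (x₂ i) ^ 2 ≤ ∑ _i : Fin 3, (3 * M ^ 2 * R₀ * ε) ^ 2 :=
          Finset.sum_le_sum (fun i _ => hic i)
      _ = 3 * (3 * M ^ 2 * R₀ * ε) ^ 2 := by
          rw [Finset.sum_const, Finset.card_univ, Fintype.card_fin, nsmul_eq_mul]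
          norm_num
      _ ≤ (6 * M ^ 2 * R₀ * ε) ^ 2 := by nlinarith [sq_nonneg (M ^ 2 * R₀ * ε)]
  calc Real.sqrt (∑ i : Fin 3, dist (x₁ i) (x₂ i) ^ 2)
      ≤ Real.sqrt ((6 * M ^ 2 * R₀ * ε) ^ 2) := Real.sqrt_le_sqrt h4
    _ = 6 * M ^ 2 * R₀ * ε := Real.sqrt_sq (by positivity)

lemma SHS.elp_ind (c : ℝ) {S : Set E3} (hS : MeasurableSet S) {q V : ℝ} (hq : 1 ≤ q)
    (hV : 0 ≤ V) (hμ : volume S ≤ ENNReal.ofReal V) :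
    eLpNorm (S.indicator fun _ => c) (ENNReal.ofReal q) volume
      ≤ ENNReal.ofReal (|c| * V ^ (1 / q)) := by
  have hq0 : (0:ℝ) < q := lt_of_lt_of_le one_pos hq
  rw [eLpNorm_indicator_const hS (by simpa using hq0) ENNReal.ofReal_ne_top]
  rw [ENNReal.toReal_ofReal hq0.le]
  calc (‖c‖₊ : ℝ≥0∞) * volume S ^ (1 / q)
      ≤ ENNReal.ofReal |c| * (ENNReal.ofReal V) ^ (1 / q) := by
        rw [show ((‖c‖₊ : ℝ≥0∞)) = ENNReal.ofReal |c| from Real.enorm_eq_ofReal_abs c]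
        exact mul_le_mul_right (ENNReal.rpow_le_rpow hμ (by positivity)) _
    _ = ENNReal.ofReal (|c| * V ^ (1 / q)) := by
        rw [ENNReal.ofReal_rpow_of_nonneg hV (by positivity : (0:ℝ) ≤ 1 / q),
          ← ENNReal.ofReal_mul (abs_nonneg c)]

lemma SHS.vol_ball (x : E3) (s : ℝ) (hs : 0 ≤ s) :
    volume (ball x s) = ENNReal.ofReal (s ^ 3) * volume (ball (0:E3) 1) := by
  rw [Measure.addHaar_ball volume x hs, finrank_euclideanSpace_fin]

lemma SHS.vol_diff_le (x₁ x₂ : E3) (r δ : ℝ) (hr : 0 < r) (hδ : 0 ≤ δ)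
    (hd : dist x₁ x₂ ≤ δ) :
    volume (ball x₁ r \ ball x₂ r)
      ≤ ENNReal.ofReal ((r + δ) ^ 3 - r ^ 3) * volume (ball (0:E3) 1) := by
  have hsub : ball x₁ r \ ball x₂ r ⊆ ball x₂ (r + δ) \ ball x₂ r := by
    intro z hz
    refine ⟨?_, hz.2⟩
    have h1 : dist z x₂ ≤ dist z x₁ + dist x₁ x₂ := dist_triangle _ _ _
    have h2 : dist z x₁ < r := mem_ball.mp hz.1
    exact mem_ball.mpr (by linarith)
  calc volume (ball x₁ r \ ball x₂ r) ≤ volume (ball x₂ (r + δ) \ ball x₂ r) :=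
        measure_mono hsub
    _ = volume (ball x₂ (r + δ)) - volume (ball x₂ r) :=
        measure_diff (ball_subset_ball (by linarith)) measurableSet_ball.nullMeasurableSet
          measure_ball_lt_top.ne
    _ ≤ ENNReal.ofReal ((r + δ) ^ 3 - r ^ 3) * volume (ball (0:E3) 1) := by
        rw [tsub_le_iff_right, SHS.vol_ball _ _ (by linarith), SHS.vol_ball _ _ hr.le,
          ← add_mul, ← ENNReal.ofReal_add
            (by nlinarith [pow_le_pow_left₀ hr.le (show r ≤ r + δ by linarith) 3])
            (by positivity)]
        apply mul_le_mul_left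
        apply ENNReal.ofReal_le_ofReal
        linarith

lemma SHS.vol_sym_le (x₁ x₂ : E3) (r δ v₀ : ℝ) (hr : 0 < r) (hδ : 0 ≤ δ)
    (hd : dist x₁ x₂ ≤ δ) (hv₀ : 0 ≤ v₀)
    (hv : volume (ball (0:E3) 1) = ENNReal.ofReal v₀) :
    volume (ball x₁ r \ ball x₂ r ∪ ball x₂ r \ ball x₁ r)
      ≤ ENNReal.ofReal (2 * ((r + δ) ^ 3 - r ^ 3) * v₀) := by
  have hΔ : 0 ≤ (r + δ) ^ 3 - r ^ 3 := by
    nlinarith [pow_le_pow_left₀ hr.le (show r ≤ r + δ by linarith) 3]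
  have h1 := SHS.vol_diff_le x₁ x₂ r δ hr hδ hd
  have h2 := SHS.vol_diff_le x₂ x₁ r δ hr hδ (by rwa [dist_comm])
  rw [hv] at h1 h2
  calc volume (ball x₁ r \ ball x₂ r ∪ ball x₂ r \ ball x₁ r)
      ≤ volume (ball x₁ r \ ball x₂ r) + volume (ball x₂ r \ ball x₁ r) :=
        measure_union_le _ _
    _ ≤ ENNReal.ofReal (((r + δ) ^ 3 - r ^ 3) * v₀)
        + ENNReal.ofReal (((r + δ) ^ 3 - r ^ 3) * v₀) := by
        rw [ENNReal.ofReal_mul hΔ]; exact add_le_add h1 h2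
    _ = ENNReal.ofReal (2 * ((r + δ) ^ 3 - r ^ 3) * v₀) := by
        rw [← ENNReal.ofReal_add (mul_nonneg hΔ hv₀) (mul_nonneg hΔ hv₀)]
        congr 1
        ring

lemma SHS.elp_key {q : ℝ} (hq : 1 ≤ q) (c₁ c₂ : ℝ) (x₁ x₂ : E3) (r : ℝ) {V W : ℝ}
    (hV : 0 ≤ V) (hW : 0 ≤ W)
    (hμ1 : volume (ball x₁ r) ≤ ENNReal.ofReal V)
    (hμU : volume (ball x₁ r \ ball x₂ r ∪ ball x₂ r \ ball x₁ r) ≤ ENNReal.ofReal W) :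
    eLpNorm (fun z => c₁ * Set.indicator (ball x₁ r) (fun _ => (1:ℝ)) z
        - c₂ * Set.indicator (ball x₂ r) (fun _ => (1:ℝ)) z) (ENNReal.ofReal q) volume
      ≤ ENNReal.ofReal (|c₁ - c₂| * V ^ (1 / q) + |c₂| * W ^ (1 / q)) := by
  set S₁ := ball x₁ r
  set S₂ := ball x₂ r
  set U := S₁ \ S₂ ∪ S₂ \ S₁ with hU
  have hUm : MeasurableSet U :=
    ((measurableSet_ball.diff measurableSet_ball).union
      (measurableSet_ball.diff measurableSet_ball))
  set g₁ := S₁.indicator (fun _ => c₁ - c₂) with hg₁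
  set g₂ := fun z => c₂ * (S₁.indicator (fun _ => (1:ℝ)) z - S₂.indicator (fun _ => (1:ℝ)) z)
    with hg₂
  have hfg : (fun z => c₁ * S₁.indicator (fun _ => (1:ℝ)) z
      - c₂ * S₂.indicator (fun _ => (1:ℝ)) z) = g₁ + g₂ := by
    funext z
    simp only [hg₁, hg₂, Pi.add_apply, Set.indicator]
    by_cases h1 : z ∈ S₁ <;> by_cases h2 : z ∈ S₂ <;> simp [h1, h2]
  rw [hfg]
  have hm₁ : AEStronglyMeasurable g₁ volume :=
    ((measurable_const.indicator measurableSet_ball)).aestronglyMeasurable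
  have hm₂ : AEStronglyMeasurable g₂ volume := by
    apply Measurable.aestronglyMeasurable
    exact ((measurable_const.indicator measurableSet_ball).sub
      (measurable_const.indicator measurableSet_ball)).const_mul c₂
  have htri := eLpNorm_add_le hm₁ hm₂ (ENNReal.one_le_ofReal.mpr hq)
  have hb₁ : eLpNorm g₁ (ENNReal.ofReal q) volume ≤ ENNReal.ofReal (|c₁ - c₂| * V ^ (1 / q)) :=
    SHS.elp_ind _ measurableSet_ball hq hV hμ1
  have hb₂ : eLpNorm g₂ (ENNReal.ofReal q) volume ≤ ENNReal.ofReal (|c₂| * W ^ (1 / q)) := by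
    have hmono : ∀ z, ‖g₂ z‖ ≤ ‖U.indicator (fun _ => |c₂|) z‖ := by
      intro z
      simp only [hg₂, Real.norm_eq_abs, Set.indicator, hU]
      by_cases h1 : z ∈ S₁ <;> by_cases h2 : z ∈ S₂ <;>
        simp [h1, h2, abs_abs, abs_nonneg, le_refl]
    calc eLpNorm g₂ (ENNReal.ofReal q) volume
        ≤ eLpNorm (U.indicator (fun _ => |c₂|)) (ENNReal.ofReal q) volume :=
          eLpNorm_mono hmono
      _ ≤ ENNReal.ofReal (|(|c₂|)| * W ^ (1 / q)) := SHS.elp_ind _ hUm hq hW hμU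
      _ = ENNReal.ofReal (|c₂| * W ^ (1 / q)) := by rw [abs_abs]
  calc eLpNorm (g₁ + g₂) (ENNReal.ofReal q) volume
      ≤ eLpNorm g₁ (ENNReal.ofReal q) volume + eLpNorm g₂ (ENNReal.ofReal q) volume := htri
    _ ≤ ENNReal.ofReal (|c₁ - c₂| * V ^ (1 / q)) + ENNReal.ofReal (|c₂| * W ^ (1 / q)) :=
        add_le_add hb₁ hb₂
    _ = ENNReal.ofReal (|c₁ - c₂| * V ^ (1 / q) + |c₂| * W ^ (1 / q)) :=
        (ENNReal.ofReal_add (by positivity) (by positivity)).symm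

lemma SHS.eps_le_rpow {ε q : ℝ} (hε : 0 ≤ ε) (h1 : ε ≤ 1) (hq : 1 ≤ q) :
    ε ≤ ε ^ (1 / q) := by
  rcases eq_or_lt_of_le hε with h | h
  · rw [← h, Real.zero_rpow (by positivity : (1:ℝ)/q ≠ 0)]
  · have := Real.rpow_le_rpow_of_exponent_ge h h1
      (show 1 / q ≤ 1 by rw [div_le_one (by linarith)]; linarith)
    rwa [Real.rpow_one] at this

lemma SHS.one_le_rpow' {ε q : ℝ} (h1 : 1 ≤ ε) (hq : 1 ≤ q) : 1 ≤ ε ^ (1 / q) := by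
  have := Real.rpow_le_rpow zero_le_one h1 (by positivity : (0:ℝ) ≤ 1 / q)
  rwa [Real.one_rpow] at this

end Aux

set_option maxHeartbeats 2000000 in
/-- Hölder stability of the sound speed: under the point-mass testing
bound against smooth globally harmonic functions with tolerance `ε`, the single-ball
piecewise constant speeds satisfy `‖c₁ − c₂‖_{L^q(ℝ³)} ≤ C ε^{1/q}` with `C` depending
only on `q`, `m`, `M`, `R₀`. -/
theorem speed_holder_stability
    (q : ℝ) (hq : 1 ≤ q) (m M R₀ : ℝ) (hm : 0 < m) (hmM : m ≤ M) (hR₀ : 0 < R₀) :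
    ∃ C > 0, ∀ (b₀ b₁ b₂ : ℝ), m ≤ b₀ → b₀ ≤ M → m ≤ b₁ → b₁ ≤ M → m ≤ b₂ → b₂ ≤ M →
      ∀ x₁ x₂ : EuclideanSpace ℝ (Fin 3),
        x₁ ∈ ball (0 : EuclideanSpace ℝ (Fin 3)) R₀ →
        x₂ ∈ ball (0 : EuclideanSpace ℝ (Fin 3)) R₀ →
      ∀ r : ℝ, 0 < r → r ≤ R₀ →
      ∀ ε : ℝ, 0 ≤ ε →
        (∀ φ : EuclideanSpace ℝ (Fin 3) → ℂ, ContDiff ℝ (⊤ : ℕ∞) φ → (∀ z, lap φ z = 0) →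
          ‖(((b₁ ^ 2)⁻¹ : ℝ) : ℂ) * φ x₁ - (((b₂ ^ 2)⁻¹ : ℝ) : ℂ) * φ x₂‖ ≤
            ε * ⨆ z : closedBall (0 : EuclideanSpace ℝ (Fin 3)) (2 * R₀),
              ‖φ z‖) →
        eLpNorm
          (fun z => (b₀ + (b₁ - b₀) * Set.indicator (ball x₁ r) (fun _ => (1 : ℝ)) z)
            - (b₀ + (b₂ - b₀) * Set.indicator (ball x₂ r) (fun _ => (1 : ℝ)) z))
          (ENNReal.ofReal q) volume
        ≤ ENNReal.ofReal (C * ε ^ (1 / q)) := by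
  have hM : 0 < M := lt_of_lt_of_le hm hmM
  obtain ⟨v₀, hv₀, hv⟩ : ∃ v₀ : ℝ, 0 ≤ v₀ ∧
      volume (ball (0 : EuclideanSpace ℝ (Fin 3)) 1) = ENNReal.ofReal v₀ :=
    ⟨_, ENNReal.toReal_nonneg, (ENNReal.ofReal_toReal measure_ball_lt_top.ne).symm⟩
  set D₁ : ℝ := 6 * M ^ 2 * R₀ with hD₁def
  have hD₁ : 0 ≤ D₁ := by positivity
  set K₃ : ℝ := 3 * R₀ ^ 2 + 3 * R₀ * D₁ + D₁ ^ 2 with hK₃def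
  have hK₃ : 0 ≤ K₃ := by positivity
  set Ca : ℝ := 2 * M * ((2 * R₀) ^ 3 * v₀) ^ (1 / q) with hCadef
  set Cb : ℝ := M ^ 4 / (2 * m) * (R₀ ^ 3 * v₀) ^ (1 / q)
    + (M - m) * (2 * (D₁ * K₃) * v₀) ^ (1 / q) with hCbdef
  have hCa : 0 ≤ Ca := by
    apply mul_nonneg (by positivity)
    exact Real.rpow_nonneg (by positivity) _
  have hCb : 0 ≤ Cb := by
    apply add_nonneg
    · exact mul_nonneg (by positivity) (Real.rpow_nonneg (by positivity) _)
    · exact mul_nonneg (by linarith) (Real.rpow_nonneg (by positivity) _)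
  refine ⟨max Ca Cb + 1, by positivity, ?_⟩
  intro b₀ b₁ b₂ hb₀m hb₀M hb₁m hb₁M hb₂m hb₂M x₁ x₂ hx₁ hx₂ r hr hrR ε hε hyp
  obtain ⟨hA, hB⟩ := SHS.extract R₀ hR₀ b₁ b₂ x₁ x₂ ε hε hyp
  clear hyp
  have hx₂n : ‖x₂‖ ≤ R₀ := by
    have := mem_ball.mp hx₂
    rw [dist_zero_right] at this
    linarith
  have hb : |b₁ - b₂| ≤ M ^ 4 / (2 * m) * ε :=
    SHS.b_diff_le m M ε hm hε b₁ b₂ hb₁m hb₁M hb₂m hb₂M hA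
  have hd : dist x₁ x₂ ≤ D₁ * ε := by
    have := SHS.x_dist_le m M R₀ ε hm hR₀ hε b₁ b₂ hb₁m hb₁M hb₂m hb₂M x₁ x₂ hx₂n hA hB
    calc dist x₁ x₂ ≤ 6 * M ^ 2 * R₀ * ε := this
      _ = D₁ * ε := by rw [hD₁def]
  have hfun : (fun z => (b₀ + (b₁ - b₀) * Set.indicator (ball x₁ r) (fun _ => (1 : ℝ)) z)
      - (b₀ + (b₂ - b₀) * Set.indicator (ball x₂ r) (fun _ => (1 : ℝ)) z))
      = fun z => (b₁ - b₀) * Set.indicator (ball x₁ r) (fun _ => (1 : ℝ)) z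
        - (b₂ - b₀) * Set.indicator (ball x₂ r) (fun _ => (1 : ℝ)) z := by
    funext z; ring
  rw [hfun]
  have hrpow0 : 0 ≤ ε ^ (1 / q) := Real.rpow_nonneg hε _
  rcases le_or_gt ε 1 with hle | hgt
  · -- small ε
    set δ : ℝ := D₁ * ε with hδdef
    have hδ0 : 0 ≤ δ := by positivity
    have hδD : δ ≤ D₁ := by
      calc δ = D₁ * ε := hδdef
        _ ≤ D₁ * 1 := by exact mul_le_mul_of_nonneg_left hle hD₁
        _ = D₁ := mul_one _
    have hμ1 : volume (ball x₁ r) ≤ ENNReal.ofReal (R₀ ^ 3 * v₀) := by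
      rw [SHS.vol_ball x₁ r hr.le, hv, ← ENNReal.ofReal_mul (by positivity)]
      apply ENNReal.ofReal_le_ofReal
      exact mul_le_mul_of_nonneg_right (pow_le_pow_left₀ hr.le hrR 3) hv₀
    have hμU := SHS.vol_sym_le x₁ x₂ r δ v₀ hr hδ0 hd hv₀ hv
    have hΔ : 0 ≤ (r + δ) ^ 3 - r ^ 3 := by
      nlinarith [pow_le_pow_left₀ hr.le (show r ≤ r + δ by linarith) 3]
    have happ := SHS.elp_key hq (b₁ - b₀) (b₂ - b₀) x₁ x₂ r
      (by positivity : (0:ℝ) ≤ R₀ ^ 3 * v₀)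
      (by positivity : (0:ℝ) ≤ 2 * ((r + δ) ^ 3 - r ^ 3) * v₀) hμ1 hμU
    refine happ.trans (ENNReal.ofReal_le_ofReal ?_)
    have habs : |b₁ - b₀ - (b₂ - b₀)| = |b₁ - b₂| := by ring_nf
    have hW_le : 2 * ((r + δ) ^ 3 - r ^ 3) * v₀ ≤ 2 * (D₁ * K₃) * v₀ * ε := by
      have h1 : r ^ 2 * δ ≤ R₀ ^ 2 * δ :=
        mul_le_mul_of_nonneg_right (pow_le_pow_left₀ hr.le hrR 2) hδ0
      have h2 : (r * δ) * δ ≤ (R₀ * D₁) * δ :=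
        mul_le_mul_of_nonneg_right
          (mul_le_mul hrR hδD hδ0 hR₀.le) hδ0
      have h3 : δ ^ 2 * δ ≤ D₁ ^ 2 * δ :=
        mul_le_mul_of_nonneg_right (pow_le_pow_left₀ hδ0 hδD 2) hδ0
      have hΔle : (r + δ) ^ 3 - r ^ 3 ≤ δ * K₃ := by
        rw [hK₃def]; nlinarith [h1, h2, h3]
      calc 2 * ((r + δ) ^ 3 - r ^ 3) * v₀ ≤ 2 * (δ * K₃) * v₀ := by
            apply mul_le_mul_of_nonneg_right _ hv₀
            linarith
        _ = 2 * (D₁ * K₃) * v₀ * ε := by rw [hδdef]; ring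
    calc |b₁ - b₀ - (b₂ - b₀)| * (R₀ ^ 3 * v₀) ^ (1 / q)
          + |b₂ - b₀| * (2 * ((r + δ) ^ 3 - r ^ 3) * v₀) ^ (1 / q)
        ≤ (M ^ 4 / (2 * m) * ε ^ (1 / q)) * (R₀ ^ 3 * v₀) ^ (1 / q)
          + (M - m) * ((2 * (D₁ * K₃) * v₀) * ε) ^ (1 / q) := by
          apply add_le_add
          · apply mul_le_mul_of_nonneg_right _ (Real.rpow_nonneg (by positivity) _)
            rw [habs]
            calc |b₁ - b₂| ≤ M ^ 4 / (2 * m) * ε := hb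
              _ ≤ M ^ 4 / (2 * m) * ε ^ (1 / q) :=
                  mul_le_mul_of_nonneg_left (SHS.eps_le_rpow hε hle hq) (by positivity)
          · apply mul_le_mul
            · rw [abs_le]; constructor <;> linarith
            · apply Real.rpow_le_rpow (by positivity) _ (by positivity)
              calc 2 * ((r + δ) ^ 3 - r ^ 3) * v₀ ≤ 2 * (D₁ * K₃) * v₀ * ε := hW_le
                _ = (2 * (D₁ * K₃) * v₀) * ε := by ring
            · exact Real.rpow_nonneg (by positivity) _
            · linarith
      _ = Cb * ε ^ (1 / q) := by
          rw [hCbdef, Real.mul_rpow (by positivity) hε]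
          ring
      _ ≤ (max Ca Cb + 1) * ε ^ (1 / q) := by
          apply mul_le_mul_of_nonneg_right _ hrpow0
          have := le_max_right Ca Cb
          linarith
  · -- large ε
    have hone : 1 ≤ ε ^ (1 / q) := SHS.one_le_rpow' hgt.le hq
    have hμ2 : volume (ball (0 : EuclideanSpace ℝ (Fin 3)) (2 * R₀))
        ≤ ENNReal.ofReal ((2 * R₀) ^ 3 * v₀) := by
      rw [SHS.vol_ball _ _ (by positivity), hv, ← ENNReal.ofReal_mul (by positivity)]
    have hpt : ∀ z, ‖(b₁ - b₀) * Set.indicator (ball x₁ r) (fun _ => (1 : ℝ)) z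
        - (b₂ - b₀) * Set.indicator (ball x₂ r) (fun _ => (1 : ℝ)) z‖
        ≤ ‖(ball (0 : EuclideanSpace ℝ (Fin 3)) (2 * R₀)).indicator
            (fun _ => 2 * M) z‖ := by
      intro z
      simp only [Real.norm_eq_abs]
      by_cases hz : z ∈ ball (0 : EuclideanSpace ℝ (Fin 3)) (2 * R₀)
      · rw [Set.indicator_of_mem hz, abs_of_nonneg (by positivity : (0:ℝ) ≤ 2 * M)]
        by_cases h1 : z ∈ ball x₁ r <;> by_cases h2 : z ∈ ball x₂ r <;>
          simp only [Set.indicator, h1, h2, if_pos, if_neg, not_false_iff, mul_one,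
            mul_zero, sub_zero, zero_sub, if_true, if_false] <;>
          rw [abs_le] <;> constructor <;> simp <;> linarith
      · have hn : ∀ x : EuclideanSpace ℝ (Fin 3),
            x ∈ ball (0 : EuclideanSpace ℝ (Fin 3)) R₀ → z ∉ ball x r := by
          intro x hx hzx
          apply hz
          rw [mem_ball] at *
          have ht := dist_triangle z x (0 : EuclideanSpace ℝ (Fin 3))
          linarith
        rw [Set.indicator_of_notMem (hn x₁ hx₁), Set.indicator_of_notMem (hn x₂ hx₂),
          Set.indicator_of_notMem hz]
        simp
    calc eLpNorm (fun z => (b₁ - b₀) * Set.indicator (ball x₁ r) (fun _ => (1 : ℝ)) z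
          - (b₂ - b₀) * Set.indicator (ball x₂ r) (fun _ => (1 : ℝ)) z)
          (ENNReal.ofReal q) volume
        ≤ eLpNorm ((ball (0 : EuclideanSpace ℝ (Fin 3)) (2 * R₀)).indicator
            (fun _ => 2 * M)) (ENNReal.ofReal q) volume := eLpNorm_mono hpt
      _ ≤ ENNReal.ofReal (|2 * M| * ((2 * R₀) ^ 3 * v₀) ^ (1 / q)) :=
          SHS.elp_ind _ measurableSet_ball hq (by positivity) hμ2
      _ ≤ ENNReal.ofReal ((max Ca Cb + 1) * ε ^ (1 / q)) := by
          apply ENNReal.ofReal_le_ofReal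
          rw [abs_of_nonneg (by positivity : (0:ℝ) ≤ 2 * M)]
          calc 2 * M * ((2 * R₀) ^ 3 * v₀) ^ (1 / q) = Ca := by rw [hCadef]
            _ ≤ (max Ca Cb + 1) * 1 := by
                rw [mul_one]
                have := le_max_left Ca Cb
                linarith
            _ ≤ (max Ca Cb + 1) * ε ^ (1 / q) := by
                apply mul_le_mul_of_nonneg_left hone
                positivity
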